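/- For every k₁ > 0 there exists a constant C > 0 such that for all j₁, j₂ ∈ {−1, 1} and all k, m ∈ ℝ with p := k − m satisfying |p| ≤ k₁, k ≠ 0, m ≠ 0 and p ≠ 0, the denominator −j₁·ω(k) − ω(p) + j₂·ω(m) is nonzero and | ρ(k)/(−j₁·ω(k) − ω(p) + j₂·ω(m)) | ≤ C·(1 + |k|). -/
import Mathlib

lemma sqrt_aux2 (x : ℝ) : Real.sqrt (1 + x ^ 2) ^ 2 = 1 + x ^ 2 :=
  Real.sq_sqrt (by positivity)

lemma sqrt_aux1 (x : ℝ) : 1 ≤ Real.sqrt (1 + x ^ 2) := by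
  nlinarith [sqrt_aux2 x, Real.sqrt_nonneg (1 + x ^ 2)]

lemma sqrt_abs_le (x : ℝ) : |x| ≤ Real.sqrt (1 + x ^ 2) := by
  nlinarith [sqrt_aux2 x, Real.sqrt_nonneg (1 + x ^ 2), sq_abs x, abs_nonneg x]

lemma sqrt_mul_ge1 (k m : ℝ) :
    1 + k * m ≤ Real.sqrt (1 + k ^ 2) * Real.sqrt (1 + m ^ 2) := by
  have h2 : (Real.sqrt (1 + k ^ 2) * Real.sqrt (1 + m ^ 2)) ^ 2
      = (1 + k ^ 2) * (1 + m ^ 2) := by rw [mul_pow, sqrt_aux2, sqrt_aux2]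
  have h0 : 0 ≤ Real.sqrt (1 + k ^ 2) * Real.sqrt (1 + m ^ 2) :=
    mul_nonneg (Real.sqrt_nonneg _) (Real.sqrt_nonneg _)
  nlinarith [sq_nonneg (k - m)]

lemma sqrt_mul_ge2 (k m : ℝ) :
    1 - k * m ≤ Real.sqrt (1 + k ^ 2) * Real.sqrt (1 + m ^ 2) := by
  have := sqrt_mul_ge1 k (-m)
  rw [neg_pow] at this
  simpa using this

lemma sqrt_lip (k m : ℝ) :
    Real.sqrt (1 + k ^ 2) - Real.sqrt (1 + m ^ 2) ≤ |k - m| := by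
  have hmq : m * (k - m) ≤ Real.sqrt (1 + m ^ 2) * |k - m| := by
    calc m * (k - m) ≤ |m * (k - m)| := le_abs_self _
      _ = |m| * |k - m| := abs_mul _ _
      _ ≤ Real.sqrt (1 + m ^ 2) * |k - m| :=
          mul_le_mul_of_nonneg_right (sqrt_abs_le m) (abs_nonneg _)
  nlinarith [hmq, sqrt_aux2 k, sqrt_aux2 m, sqrt_aux1 k, sqrt_aux1 m,
    abs_nonneg (k - m), sq_abs (k - m)]

lemma sum_aux (fk fm fp F k₁ : ℝ) (hfk1 : 1 ≤ fk) (hfm1 : 1 ≤ fm) (hfp1 : 1 ≤ fp)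
    (hF1 : 1 ≤ F) (hfpF : fp ≤ F) (hk₁ : 0 < k₁)
    (hsub : fp ^ 2 + 3 ≤ (fk + fm) ^ 2) : 1 ≤ (fk + fm - fp) * (F + k₁) := by
  have hS : fp ≤ fk + fm := by nlinarith
  rcases le_or_gt (fk + fm) (2 * F) with hc | hc
  · nlinarith
  · nlinarith

lemma key_lb (k₁ k m s₁ s₂ s₃ : ℝ) (hk₁ : 0 < k₁) (hp : |k - m| ≤ k₁)
    (h1 : s₁ = 1 ∨ s₁ = -1) (h2 : s₂ = 1 ∨ s₂ = -1) (h3 : s₃ = 1 ∨ s₃ = -1) :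
    1 / (Real.sqrt (1 + k₁ ^ 2) + k₁) ≤
      |s₁ * Real.sqrt (1 + k ^ 2) + s₂ * Real.sqrt (1 + m ^ 2)
        - s₃ * Real.sqrt (1 + (k - m) ^ 2)| := by
  set fk := Real.sqrt (1 + k ^ 2) with hfk
  set fm := Real.sqrt (1 + m ^ 2) with hfm
  set fp := Real.sqrt (1 + (k - m) ^ 2) with hfp
  set F := Real.sqrt (1 + k₁ ^ 2) with hF
  set q := |k - m| with hq
  have hq0 : 0 ≤ q := abs_nonneg _
  have hq2 : q ^ 2 = (k - m) ^ 2 := sq_abs _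
  have hfk2 : fk ^ 2 = 1 + k ^ 2 := sqrt_aux2 k
  have hfm2 : fm ^ 2 = 1 + m ^ 2 := sqrt_aux2 m
  have hfp2 : fp ^ 2 = 1 + (k - m) ^ 2 := sqrt_aux2 (k - m)
  have hfk1 : 1 ≤ fk := sqrt_aux1 k
  have hfm1 : 1 ≤ fm := sqrt_aux1 m
  have hfp1 : 1 ≤ fp := sqrt_aux1 (k - m)
  have hF1 : 1 ≤ F := sqrt_aux1 k₁
  have hfpF : fp ≤ F := by
    apply Real.sqrt_le_sqrt
    have h1 := abs_le.mp hp
    nlinarith [h1.1, h1.2]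
  have hFk : (0:ℝ) < F + k₁ := by linarith
  have hlip1 : fk - fm ≤ q := sqrt_lip k m
  have hlip2 : fm - fk ≤ q := by
    have := sqrt_lip m k
    rwa [abs_sub_comm] at this
  have hsub : fp ^ 2 + 3 ≤ (fk + fm) ^ 2 := by
    nlinarith [sqrt_mul_ge2 k m]
  have hfpq : q < fp := by nlinarith
  have hfpqe : (fp - q) * (fp + q) = 1 := by linear_combination hfp2 - hq2
  rw [div_le_iff₀ hFk]
  have mixed : ∀ D : ℝ, (fp - q ≤ D ∨ fp - q ≤ -D) → 1 ≤ |D| * (F + k₁) := by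
    intro D hD
    have hDa : fp - q ≤ |D| := by
      rcases hD with h | h
      · exact h.trans (le_abs_self D)
      · exact h.trans (neg_le_abs D)
    calc (1:ℝ) = (fp - q) * (fp + q) := hfpqe.symm
      _ ≤ |D| * (F + k₁) :=
        mul_le_mul hDa (by linarith) (by linarith) (abs_nonneg D)
  have sumb : ∀ D : ℝ, (D = fk + fm - fp ∨ D = -(fk + fm - fp)) →
      1 ≤ |D| * (F + k₁) := by
    intro D hD
    have hs := sum_aux fk fm fp F k₁ hfk1 hfm1 hfp1 hF1 hfpF hk₁ hsub
    have habs : fk + fm - fp ≤ |D| := by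
      rcases hD with h | h
      · rw [h]; exact le_abs_self _
      · rw [h, abs_neg]; exact le_abs_self _
    exact hs.trans (mul_le_mul_of_nonneg_right habs hFk.le)
  have bigb : ∀ D : ℝ, (3 ≤ D ∨ 3 ≤ -D) → 1 ≤ |D| * (F + k₁) := by
    intro D hD
    have hDa : 3 ≤ |D| := by
      rcases hD with h | h
      · exact h.trans (le_abs_self D)
      · exact h.trans (neg_le_abs D)
    calc (1:ℝ) ≤ 3 * (F + k₁) := by linarith
      _ ≤ |D| * (F + k₁) := mul_le_mul_of_nonneg_right hDa hFk.le
  rcases h1 with rfl | rfl <;> rcases h2 with rfl | rfl <;> rcases h3 with rfl | rfl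
  · exact sumb _ (Or.inl (by ring))
  · exact bigb _ (Or.inl (by linarith))
  · exact mixed _ (Or.inr (by linarith))
  · exact mixed _ (Or.inl (by linarith))
  · exact mixed _ (Or.inr (by linarith))
  · exact mixed _ (Or.inl (by linarith))
  · exact bigb _ (Or.inr (by linarith))
  · exact sumb _ (Or.inr (by ring))

lemma sign_pm (x : ℝ) (hx : x ≠ 0) : Real.sign x = 1 ∨ Real.sign x = -1 := by
  rcases lt_or_gt_of_ne hx with h | h
  · exact Or.inr (Real.sign_of_neg h)
  · exact Or.inl (Real.sign_of_pos h)

/-- The dispersion relation ω(k) = sign(k)·√(1+k²), with sign(0) = 0. -/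
noncomputable def omega (k : ℝ) : ℝ := Real.sign k * Real.sqrt (1 + k ^ 2)

/-- The symbol ρ(k) = sign(k)·k²/√(1+k²). -/
noncomputable def rho (k : ℝ) : ℝ := Real.sign k * (k ^ 2 / Real.sqrt (1 + k ^ 2))

/-- Linear growth of the normal-form kernels: for every `k₁ > 0` there is `C > 0` such
that for all `j₁, j₂ ∈ {−1,1}` and all `k, m` with `p := k − m` satisfying `|p| ≤ k₁`,
`k ≠ 0`, `m ≠ 0`, `p ≠ 0`, the denominator `−j₁·ω(k) − ω(p) + j₂·ω(m)` is nonzero and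
`|ρ(k)/(−j₁·ω(k) − ω(p) + j₂·ω(m))| ≤ C·(1 + |k|)`. -/

theorem kernel_linear_growth (k₁ : ℝ) (hk₁ : 0 < k₁) :
    ∃ C > (0 : ℝ), ∀ j₁ j₂ : ℝ, (j₁ = 1 ∨ j₁ = -1) → (j₂ = 1 ∨ j₂ = -1) →
      ∀ k m : ℝ, |k - m| ≤ k₁ → k ≠ 0 → m ≠ 0 → k - m ≠ 0 →
        (-j₁ * omega k - omega (k - m) + j₂ * omega m ≠ 0) ∧
        |rho k / (-j₁ * omega k - omega (k - m) + j₂ * omega m)| ≤ C * (1 + |k|) := by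
  have hF1 : 1 ≤ Real.sqrt (1 + k₁ ^ 2) := sqrt_aux1 k₁
  refine ⟨Real.sqrt (1 + k₁ ^ 2) + k₁, by linarith, ?_⟩
  intro j₁ j₂ hj₁ hj₂ k m hp hk hm hpm
  set F := Real.sqrt (1 + k₁ ^ 2) with hF
  have hFk : (0:ℝ) < F + k₁ := by linarith
  set D := -j₁ * omega k - omega (k - m) + j₂ * omega m with hD
  have hDeq : D = (-j₁ * Real.sign k) * Real.sqrt (1 + k ^ 2)
      + (j₂ * Real.sign m) * Real.sqrt (1 + m ^ 2)
      - (Real.sign (k - m)) * Real.sqrt (1 + (k - m) ^ 2) := by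
    simp only [hD, omega]; ring
  have hs₁ : -j₁ * Real.sign k = 1 ∨ -j₁ * Real.sign k = -1 := by
    rcases hj₁ with rfl | rfl <;> rcases sign_pm k hk with h | h <;> rw [h] <;> norm_num
  have hs₂ : j₂ * Real.sign m = 1 ∨ j₂ * Real.sign m = -1 := by
    rcases hj₂ with rfl | rfl <;> rcases sign_pm m hm with h | h <;> rw [h] <;> norm_num
  have hs₃ : Real.sign (k - m) = 1 ∨ Real.sign (k - m) = -1 := sign_pm _ hpm
  have hDlb : 1 / (F + k₁) ≤ |D| := by
    rw [hDeq]
    exact key_lb k₁ k m _ _ _ hk₁ hp hs₁ hs₂ hs₃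
  have hDpos : 0 < |D| := lt_of_lt_of_le (by positivity) hDlb
  have hDne : D ≠ 0 := fun h => by simp [h] at hDpos
  refine ⟨hDne, ?_⟩
  -- bound on |rho k|
  have hfk1 : 1 ≤ Real.sqrt (1 + k ^ 2) := sqrt_aux1 k
  have hrho : |rho k| ≤ |k| := by
    have hsk : |Real.sign k| = 1 := by
      rcases sign_pm k hk with h | h <;> rw [h] <;> norm_num
    rw [rho, abs_mul, hsk, one_mul, abs_div, abs_of_nonneg (sq_nonneg k),
      abs_of_nonneg (by linarith : (0:ℝ) ≤ Real.sqrt (1 + k ^ 2)),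
      div_le_iff₀ (by linarith : (0:ℝ) < Real.sqrt (1 + k ^ 2))]
    calc k ^ 2 = |k| * |k| := by rw [← abs_mul]; rw [abs_of_nonneg (mul_self_nonneg k)]; ring
      _ ≤ |k| * Real.sqrt (1 + k ^ 2) :=
        mul_le_mul_of_nonneg_left (sqrt_abs_le k) (abs_nonneg k)
  have hD1 : 1 ≤ |D| * (F + k₁) := (div_le_iff₀ hFk).mp hDlb
  rw [abs_div, div_le_iff₀ hDpos]
  have hkn : (0:ℝ) ≤ 1 + |k| := by positivity
  nlinarith [mul_le_mul_of_nonneg_left hD1 hkn, abs_nonneg k]
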